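/- arXiv:2405.17953 — 3 statements merged into one kernel-verified Lean document; each statement's English description precedes it below -/
import Mathlib

section
/- In a w×h rectangular grid graph (w rows, h columns of vertices) with w and h both even, any closed walk that connects the junction graph at every vertex must make at least one turn at each vertex, hence at least w·h turns in total. -/
open Finset

structure ClosedWalk {V : Type*} (G : SimpleGraph V) (n : ℕ) where
  f : ZMod n → V
  adj : ∀ i : ZMod n, G.Adj (f i) (f (i + 1))

namespace ClosedWalk

variable {V : Type*} {G : SimpleGraph V} {n : ℕ}

def edgeAt (w : ClosedWalk G n) (i : ZMod n) : Sym2 V := s(w.f i, w.f (i + 1))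

def NoUTurn (w : ClosedWalk G n) : Prop := ∀ i : ZMod n, w.f (i + 2) ≠ w.f i

def CoversEdges (w : ClosedWalk G n) : Prop := ∀ e ∈ G.edgeSet, ∃ i, w.edgeAt i = e

/-- The junction graph of the walk at vertex `v`: its vertices are the edges of `G`
incident to `v`, and two such edges are adjacent when some passage of the walk
through `v` uses them consecutively. -/
def junctionGraph (w : ClosedWalk G n) (v : V) : SimpleGraph (G.incidenceSet v) :=
  SimpleGraph.fromRel (fun e e' => ∃ i : ZMod n, w.f (i + 1) = v ∧
    ((w.edgeAt i = e.1 ∧ w.edgeAt (i + 1) = e'.1) ∨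
      (w.edgeAt i = e'.1 ∧ w.edgeAt (i + 1) = e.1)))

def IsThreading (w : ClosedWalk G n) : Prop :=
  w.CoversEdges ∧ w.NoUTurn ∧ ∀ v : V, (w.junctionGraph v).Connected

noncomputable def cost [NeZero n] (β : V → V → V → ℝ) (w : ClosedWalk G n) : ℝ :=
  ∑ i : ZMod n, β (w.f (i + 1)) (w.f i) (w.f (i + 2))

end ClosedWalk

/-- The `w × h` rectangular grid graph on vertex set `Fin w × Fin h`,
with edges between vertices at L¹-distance 1. -/
def GridGraph (w h : ℕ) : SimpleGraph (Fin w × Fin h) :=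
  SimpleGraph.fromRel (fun a b =>
    (a.1 = b.1 ∧ (a.2 : ℕ) + 1 = (b.2 : ℕ)) ∨ (a.2 = b.2 ∧ (a.1 : ℕ) + 1 = (b.1 : ℕ)))

/-- Three grid vertices are collinear (a straight passage, not a turn). -/
def GridCollinear {w h : ℕ} (a b c : Fin w × Fin h) : Prop :=
  (a.1 = b.1 ∧ b.1 = c.1) ∨ (a.2 = b.2 ∧ b.2 = c.2)

/-- The set of (cyclic) positions at which the closed walk `W` makes a turn. -/
def turnSet {w h n : ℕ} (W : ClosedWalk (GridGraph w h) n) : Set (ZMod n) :=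
  {i : ZMod n | ¬ GridCollinear (W.f i) (W.f (i + 1)) (W.f (i + 2))}

section Aux

lemma grid_adj_cases {w h : ℕ} {a b : Fin w × Fin h} (hab : (GridGraph w h).Adj a b) :
    (a.1 = b.1 ∧ a.2 ≠ b.2) ∨ (a.1 ≠ b.1 ∧ a.2 = b.2) := by
  rw [GridGraph, SimpleGraph.fromRel_adj] at hab
  obtain ⟨hne, hrel⟩ := hab
  rcases hrel with (⟨h1, h2⟩ | ⟨h1, h2⟩) | (⟨h1, h2⟩ | ⟨h1, h2⟩)
  · exact Or.inl ⟨h1, fun he => by rw [he] at h2; omega⟩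
  · exact Or.inr ⟨fun he => by rw [he] at h2; omega, h1⟩
  · exact Or.inl ⟨h1.symm, fun he => by rw [he] at h2; omega⟩
  · exact Or.inr ⟨fun he => by rw [he] at h2; omega, h1.symm⟩

lemma exists_boundary_pair {V : Type*} {G : SimpleGraph V} (Q : V → Prop) :
    ∀ {a b : V}, G.Walk a b → Q a → ¬ Q b →
      ∃ x y, G.Adj x y ∧ Q x ∧ ¬ Q y
  | _, _, .nil, ha, hb => absurd ha hb
  | _, _, @SimpleGraph.Walk.cons _ _ _ c _ hadj p, ha, hb => by
    by_cases hq : Q c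
    · exact exists_boundary_pair Q p hq hb
    · exact ⟨_, _, hadj, ha, hq⟩

lemma fin_neighbor {k : ℕ} (hk : 2 ≤ k) (j : Fin k) :
    ∃ j' : Fin k, ((j : ℕ) + 1 = (j' : ℕ) ∨ (j' : ℕ) + 1 = (j : ℕ)) := by
  by_cases hlt : (j : ℕ) + 1 < k
  · exact ⟨⟨(j : ℕ) + 1, hlt⟩, Or.inl rfl⟩
  · have h0 : 0 < (j : ℕ) := by omega
    exact ⟨⟨(j : ℕ) - 1, by omega⟩, Or.inr (by simp; omega)⟩

lemma grid_adj_of_row {w h : ℕ} (v : Fin w × Fin h) (j' : Fin h)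
    (hj : (v.2 : ℕ) + 1 = (j' : ℕ) ∨ (j' : ℕ) + 1 = (v.2 : ℕ)) :
    (GridGraph w h).Adj v (v.1, j') := by
  rw [GridGraph, SimpleGraph.fromRel_adj]
  refine ⟨fun he => ?_, ?_⟩
  · have : v.2 = j' := congrArg Prod.snd he
    rw [this] at hj; omega
  · rcases hj with hj | hj
    · exact Or.inl (Or.inl ⟨rfl, hj⟩)
    · exact Or.inr (Or.inl ⟨rfl, hj⟩)

lemma grid_adj_of_col {w h : ℕ} (v : Fin w × Fin h) (j' : Fin w)
    (hj : (v.1 : ℕ) + 1 = (j' : ℕ) ∨ (j' : ℕ) + 1 = (v.1 : ℕ)) :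
    (GridGraph w h).Adj v (j', v.2) := by
  rw [GridGraph, SimpleGraph.fromRel_adj]
  refine ⟨fun he => ?_, ?_⟩
  · have : v.1 = j' := congrArg Prod.fst he
    rw [this] at hj; omega
  · rcases hj with hj | hj
    · exact Or.inl (Or.inr ⟨rfl, hj⟩)
    · exact Or.inr (Or.inr ⟨rfl, hj⟩)

lemma not_collinear_of {w h : ℕ} {a v c : Fin w × Fin h}
    (hav : (GridGraph w h).Adj a v)
    (h1 : a.1 = v.1) (h2 : c.1 ≠ v.1) : ¬ GridCollinear a v c := by
  have h3 : a.2 ≠ v.2 := by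
    rcases grid_adj_cases hav with ⟨_, hne⟩ | ⟨hne, _⟩
    · exact hne
    · exact absurd h1 hne
  rintro (⟨_, e⟩ | ⟨e, _⟩)
  · exact h2 e.symm
  · exact h3 e

lemma not_collinear_of' {w h : ℕ} {a v c : Fin w × Fin h}
    (hvc : (GridGraph w h).Adj v c)
    (h1 : c.1 = v.1) (h2 : a.1 ≠ v.1) : ¬ GridCollinear a v c := by
  have h3 : c.2 ≠ v.2 := by
    rcases grid_adj_cases hvc with ⟨_, hne⟩ | ⟨hne, _⟩
    · exact fun he => hne he.symm
    · exact absurd h1.symm hne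
  rintro (⟨e, _⟩ | ⟨_, e⟩)
  · exact h2 e
  · exact h3 e.symm

lemma exists_turn_at {w h n : ℕ} (hw2 : 2 ≤ w) (hh2 : 2 ≤ h)
    (W : ClosedWalk (GridGraph w h) n) (v : Fin w × Fin h)
    (hconn : (W.junctionGraph v).Connected) :
    ∃ i : ZMod n, W.f (i + 1) = v ∧ i ∈ turnSet W := by
  classical
  let G := GridGraph w h
  -- a horizontal incident edge (same row)
  obtain ⟨j', hj'⟩ := fin_neighbor hh2 v.2
  have hadjH : G.Adj v (v.1, j') := grid_adj_of_row v j' hj'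
  obtain ⟨j'', hj''⟩ := fin_neighbor hw2 v.1
  have hadjV : G.Adj v (j'', v.2) := grid_adj_of_col v j'' hj''
  let eH : G.incidenceSet v := ⟨s(v, (v.1, j')), (G.mk'_mem_incidenceSet_iff).mpr ⟨hadjH, Or.inl rfl⟩⟩
  let eV : G.incidenceSet v := ⟨s(v, (j'', v.2)), (G.mk'_mem_incidenceSet_iff).mpr ⟨hadjV, Or.inl rfl⟩⟩
  -- "horizontal edge" predicate
  set Q : G.incidenceSet v → Prop := fun e => ∀ x ∈ e.1, x.1 = v.1 with hQ
  have hQH : Q eH := by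
    intro x hx
    rcases Sym2.mem_iff.mp hx with hx | hx <;> subst hx <;> rfl
  have hQV : ¬ Q eV := by
    intro hq
    have := hq (j'', v.2) (Sym2.mem_iff.mpr (Or.inr rfl))
    have : (j'' : ℕ) = (v.1 : ℕ) := congrArg Fin.val this
    omega
  obtain ⟨p⟩ := hconn eH eV
  obtain ⟨x, y, hxy, hqx, hqy⟩ := exists_boundary_pair Q p hQH hQV
  rw [ClosedWalk.junctionGraph, SimpleGraph.fromRel_adj] at hxy
  obtain ⟨-, hrel⟩ := hxy
  -- extract a passage through v whose incoming edge differs in Q-status from outgoing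
  have key : ∃ i : ZMod n, W.f (i + 1) = v ∧
      ((W.edgeAt i = x.1 ∧ W.edgeAt (i + 1) = y.1) ∨
        (W.edgeAt i = y.1 ∧ W.edgeAt (i + 1) = x.1)) := by
    rcases hrel with ⟨i, hv, hc⟩ | ⟨i, hv, hc⟩
    · exact ⟨i, hv, hc⟩
    · exact ⟨i, hv, hc.symm⟩
  obtain ⟨i, hv, hc⟩ := key
  refine ⟨i, hv, ?_⟩
  have hadj1 : G.Adj (W.f i) (W.f (i + 1)) := W.adj i
  have hadj2 : G.Adj (W.f (i + 1)) (W.f (i + 2)) := by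
    have := W.adj (i + 1); rwa [add_assoc, one_add_one_eq_two] at this
  have hmem1 : W.f i ∈ W.edgeAt i := Sym2.mem_iff.mpr (Or.inl rfl)
  have hmem2 : W.f (i + 2) ∈ W.edgeAt (i + 1) := by
    have : W.edgeAt (i + 1) = s(W.f (i + 1), W.f (i + 1 + 1)) := rfl
    rw [this, add_assoc, one_add_one_eq_two]
    exact Sym2.mem_iff.mpr (Or.inr rfl)
  simp only [turnSet, Set.mem_setOf_eq, hv]
  rcases hc with ⟨hc1, hc2⟩ | ⟨hc1, hc2⟩
  · -- edgeAt i is the Q edge (horizontal), edgeAt (i+1) is not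
    have h1 : (W.f i).1 = v.1 := hqx (W.f i) (hc1 ▸ hmem1)
    have h2 : (W.f (i + 2)).1 ≠ v.1 := by
      intro he
      apply hqy
      intro z hz
      rw [← hc2] at hz
      rcases Sym2.mem_iff.mp hz with hz | hz
      · subst hz; rw [hv]
      · have : W.f (i + 1 + 1) = W.f (i + 2) := by rw [add_assoc, one_add_one_eq_two]
        rw [hz]  -- z = W.f (i+1+1)
        rw [this, he]
    exact not_collinear_of (hv ▸ hadj1) (hv ▸ h1) h2
  · -- edgeAt i is the non-Q edge, edgeAt (i+1) is the Q edge
    have h1 : (W.f (i + 2)).1 = v.1 := hqx (W.f (i + 2)) (hc2 ▸ hmem2)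
    have h2 : (W.f i).1 ≠ v.1 := by
      intro he
      apply hqy
      intro z hz
      rw [← hc1] at hz
      rcases Sym2.mem_iff.mp hz with hz | hz
      · subst hz; exact he
      · rw [hz, hv]
    exact not_collinear_of' (hv ▸ hadj2) (hv ▸ h1) h2

end Aux

/-- In a `w × h` rectangular grid with `w` and `h` both even, any closed walk whose
junction graph at every vertex is connected makes at least `w·h` turns. -/
theorem grid_even_even_turns_lower_bound (w h : ℕ) (hw : 0 < w) (hh : 0 < h)
    (hew : Even w) (heh : Even h) (n : ℕ) [NeZero n]
    (W : ClosedWalk (GridGraph w h) n)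
    (hconn : ∀ v, (W.junctionGraph v).Connected) :
    w * h ≤ (turnSet W).ncard := by
  classical
  have hw2 : 2 ≤ w := by rcases hew with ⟨k, hk⟩; omega
  have hh2 : 2 ≤ h := by rcases heh with ⟨k, hk⟩; omega
  have hchoice : ∀ v : Fin w × Fin h, ∃ i : ZMod n, W.f (i + 1) = v ∧ i ∈ turnSet W :=
    fun v => exists_turn_at hw2 hh2 W v (hconn v)
  choose idx hidx1 hidx2 using hchoice
  let F : Fin w × Fin h → (turnSet W : Set (ZMod n)) := fun v => ⟨idx v, hidx2 v⟩
  have hinj : Function.Injective F := by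
    intro v v' hvv'
    have : idx v = idx v' := congrArg Subtype.val hvv'
    rw [← hidx1 v, ← hidx1 v', this]
  have hcard : Nat.card (Fin w × Fin h) ≤ Nat.card (turnSet W : Set (ZMod n)) :=
    Nat.card_le_card_of_injective F hinj
  calc w * h = Nat.card (Fin w × Fin h) := by simp [Nat.card_eq_fintype_card]
    _ ≤ Nat.card (turnSet W : Set (ZMod n)) := hcard
    _ = (turnSet W).ncard := Nat.card_coe_set_eq _
end

section
/- In any threading of a rectangular grid graph, each vertex column contains an even number of turns; combined with the fact that each of the h vertices in a column requires at least one turn, each column contains at least 2⌈h/2⌉ turns. -/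
open Finset

-- auxiliary lemmas
lemma grid_adj_dichotomy {w h : ℕ} {a b : Fin w × Fin h} (hab : (GridGraph w h).Adj a b) :
    (a.1 = b.1 ∧ ¬ a.2 = b.2) ∨ (a.2 = b.2 ∧ ¬ a.1 = b.1) := by
  rw [GridGraph, SimpleGraph.fromRel_adj] at hab
  obtain ⟨hne, hr⟩ := hab
  have h1 : a.1 = b.1 ∨ a.2 = b.2 := by tauto
  have h2 : ¬ (a.1 = b.1 ∧ a.2 = b.2) := fun ⟨u, v⟩ => hne (Prod.ext u v)
  tauto

lemma turn_iff {w h : ℕ} {a b c : Fin w × Fin h} (hab : (GridGraph w h).Adj a b)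
    (hbc : (GridGraph w h).Adj b c) :
    (¬ GridCollinear a b c) ↔ ¬ (a.1 = b.1 ↔ b.1 = c.1) := by
  have d1 := grid_adj_dichotomy hab
  have d2 := grid_adj_dichotomy hbc
  unfold GridCollinear
  tauto

lemma adj_flip {V : Type*} {G : SimpleGraph V} (P : V → Prop) {a b : V} (p : G.Walk a b) :
    P a → ¬ P b → ∃ x y, G.Adj x y ∧ P x ∧ ¬ P y := by
  induction p with
  | nil => exact fun ha hb => absurd ha hb
  | @cons u v w huv p ih =>
      intro ha hb
      by_cases hv : P v
      · exact ih hv hb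
      · exact ⟨u, v, huv, ha, hv⟩

lemma walk_no_leaf {V : Type*} {G : SimpleGraph V} {n : ℕ} [NeZero n]
    (W : ClosedWalk G n) (hNoU : W.NoUTurn) (hCov : W.CoversEdges) (v u0 : V)
    (hadj : G.Adj v u0) (huniq : ∀ u, G.Adj v u → u = u0) : False := by
  obtain ⟨i, hi⟩ := hCov s(v, u0) ((G.mem_edgeSet).2 hadj)
  rw [ClosedWalk.edgeAt, Sym2.eq_iff] at hi
  obtain ⟨j, hj⟩ : ∃ j : ZMod n, W.f (j + 1) = v := by
    rcases hi with ⟨h1, _⟩ | ⟨_, h2⟩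
    · exact ⟨i - 1, by rwa [sub_add_cancel]⟩
    · exact ⟨i, h2⟩
  have h1 : W.f j = u0 := huniq _ (by rw [← hj]; exact (W.adj j).symm)
  have h2 : W.f (j + 2) = u0 := by
    have := W.adj (j + 1)
    rw [hj] at this
    have e : j + 1 + 1 = j + 2 := by ring
    rw [e] at this
    exact huniq _ this
  exact hNoU j (h2.trans h1.symm)

lemma degenerate_no_threading {w h n : ℕ} [NeZero n] (hw : 0 < w) (hh : 0 < h)
    (hdeg : w = 1 ∨ h = 1) (W : ClosedWalk (GridGraph w h) n) (hT : W.IsThreading) : False := by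
  by_cases hw1 : w = 1
  · by_cases hh1 : h = 1
    · -- 1×1 grid: no edges at all
      subst hw1; subst hh1
      exact (W.adj 0).ne (Subsingleton.elim _ _)
    · -- w = 1, h ≥ 2 : corner (0,0) has unique neighbour (0,1)
      have hh2 : 2 ≤ h := by omega
      set v0 : Fin w × Fin h := (⟨0, hw⟩, ⟨0, hh⟩) with hv0
      set u0 : Fin w × Fin h := (⟨0, hw⟩, ⟨1, hh2⟩) with hu0
      have hadj : (GridGraph w h).Adj v0 u0 := by
        simp only [GridGraph]; rw [SimpleGraph.fromRel_adj]
        refine ⟨fun he => ?_, Or.inl (Or.inl ⟨rfl, rfl⟩)⟩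
        have := congrArg (fun p => (p.2 : ℕ)) he; simp [hv0, hu0] at this
      refine walk_no_leaf W hT.2.1 hT.1 v0 u0 hadj fun u hu => ?_
      rw [GridGraph, SimpleGraph.fromRel_adj] at hu
      obtain ⟨hne, hr⟩ := hu
      have hu1 : (u.1 : ℕ) < w := u.1.isLt
      have hu2 : (u.2 : ℕ) < h := u.2.isLt
      rcases hr with (⟨h1, h2⟩ | ⟨h1, h2⟩) | (⟨h1, h2⟩ | ⟨h1, h2⟩)
      · exact Prod.ext (Fin.ext (by omega)) (Fin.ext (by simpa [hv0] using h2.symm))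
      · exfalso; simp [hv0] at h2; omega
      · exfalso; simp [hv0] at h2
      · exfalso; simp [hv0] at h2
  · -- h = 1, w ≥ 2 : corner (0,0) has unique neighbour (1,0)
    have hh1 : h = 1 := by tauto
    have hw2 : 2 ≤ w := by omega
    set v0 : Fin w × Fin h := (⟨0, hw⟩, ⟨0, hh⟩) with hv0
    set u0 : Fin w × Fin h := (⟨1, hw2⟩, ⟨0, hh⟩) with hu0
    have hadj : (GridGraph w h).Adj v0 u0 := by
      simp only [GridGraph]; rw [SimpleGraph.fromRel_adj]
      refine ⟨fun he => ?_, Or.inl (Or.inr ⟨rfl, rfl⟩)⟩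
      have := congrArg (fun p => (p.1 : ℕ)) he; simp [hv0, hu0] at this
    refine walk_no_leaf W hT.2.1 hT.1 v0 u0 hadj fun u hu => ?_
    rw [GridGraph, SimpleGraph.fromRel_adj] at hu
    obtain ⟨hne, hr⟩ := hu
    have hu1 : (u.1 : ℕ) < w := u.1.isLt
    have hu2 : (u.2 : ℕ) < h := u.2.isLt
    rcases hr with (⟨h1, h2⟩ | ⟨h1, h2⟩) | (⟨h1, h2⟩ | ⟨h1, h2⟩)
    · exfalso; simp [hv0] at h2; omega
    · exact Prod.ext (Fin.ext (by simpa [hv0] using h2.symm)) (Fin.ext (by omega))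
    · exfalso; simp [hv0] at h2
    · exfalso; simp [hv0] at h2

lemma exists_horiz_neighbor {w h : ℕ} (hw2 : 2 ≤ w) (v : Fin w × Fin h) :
    ∃ u, (GridGraph w h).Adj v u ∧ u.2 = v.2 ∧ ¬ u.1 = v.1 := by
  rcases lt_or_ge ((v.1 : ℕ) + 1) w with hlt | hge
  · refine ⟨(⟨(v.1 : ℕ) + 1, hlt⟩, v.2), ?_, rfl, fun he => by
      have := congrArg (Fin.val) he; simp at this⟩
    simp only [GridGraph]; rw [SimpleGraph.fromRel_adj]
    refine ⟨fun he => ?_, Or.inl (Or.inr ⟨rfl, rfl⟩)⟩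
    have := congrArg (fun p => (p.1 : ℕ)) he; simp at this
  · have h1 : 1 ≤ (v.1 : ℕ) := by have := v.1.isLt; omega
    refine ⟨(⟨(v.1 : ℕ) - 1, by have := v.1.isLt; omega⟩, v.2), ?_, rfl, fun he => by
      have := congrArg (Fin.val) he; simp at this; omega⟩
    simp only [GridGraph]; rw [SimpleGraph.fromRel_adj]
    refine ⟨fun he => ?_, Or.inr (Or.inr ⟨rfl, by simp; omega⟩)⟩
    have := congrArg (fun p => (p.1 : ℕ)) he; simp at this; omega

lemma exists_vert_neighbor {w h : ℕ} (hh2 : 2 ≤ h) (v : Fin w × Fin h) :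
    ∃ u, (GridGraph w h).Adj v u ∧ u.1 = v.1 ∧ ¬ u.2 = v.2 := by
  rcases lt_or_ge ((v.2 : ℕ) + 1) h with hlt | hge
  · refine ⟨(v.1, ⟨(v.2 : ℕ) + 1, hlt⟩), ?_, rfl, fun he => by
      have := congrArg (Fin.val) he; simp at this⟩
    simp only [GridGraph]; rw [SimpleGraph.fromRel_adj]
    refine ⟨fun he => ?_, Or.inl (Or.inl ⟨rfl, rfl⟩)⟩
    have := congrArg (fun p => (p.2 : ℕ)) he; simp at this
  · have h1 : 1 ≤ (v.2 : ℕ) := by have := v.2.isLt; omega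
    refine ⟨(v.1, ⟨(v.2 : ℕ) - 1, by have := v.2.isLt; omega⟩), ?_, rfl, fun he => by
      have := congrArg (Fin.val) he; simp at this; omega⟩
    simp only [GridGraph]; rw [SimpleGraph.fromRel_adj]
    refine ⟨fun he => ?_, Or.inr (Or.inl ⟨rfl, by simp; omega⟩)⟩
    have := congrArg (fun p => (p.2 : ℕ)) he; simp at this; omega

lemma exists_turn {w h n : ℕ} [NeZero n] (hw2 : 2 ≤ w) (hh2 : 2 ≤ h)
    (W : ClosedWalk (GridGraph w h) n) (hT : W.IsThreading) (v : Fin w × Fin h) :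
    ∃ i, W.f (i + 1) = v ∧ ¬ GridCollinear (W.f i) (W.f (i + 1)) (W.f (i + 2)) := by
  classical
  obtain ⟨uH, hAH, hH2, hH1⟩ := exists_horiz_neighbor hw2 v
  obtain ⟨uV, hAV, hV1, hV2⟩ := exists_vert_neighbor hh2 v
  set Q : Sym2 (Fin w × Fin h) → Prop :=
    fun e => ∃ a b : Fin w × Fin h, e = s(a, b) ∧ a.2 = b.2 with hQdef
  have hQ_iff : ∀ a b : Fin w × Fin h, Q s(a, b) ↔ a.2 = b.2 := by
    intro a b
    constructor
    · rintro ⟨c, d, hcd, h2⟩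
      rw [Sym2.eq_iff] at hcd
      rcases hcd with ⟨rfl, rfl⟩ | ⟨rfl, rfl⟩
      · exact h2
      · exact h2.symm
    · intro h2; exact ⟨a, b, rfl, h2⟩
  set eH : (GridGraph w h).incidenceSet v :=
    ⟨s(v, uH), ((GridGraph w h).mk'_mem_incidenceSet_left_iff).2 hAH⟩ with heH
  set eV : (GridGraph w h).incidenceSet v :=
    ⟨s(v, uV), ((GridGraph w h).mk'_mem_incidenceSet_left_iff).2 hAV⟩ with heV
  obtain ⟨p⟩ := ((hT.2.2 v).preconnected eH eV)
  obtain ⟨e, e', hadj, hPe, hPe'⟩ := adj_flip (fun e => Q e.1) p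
    (by rw [heH]; exact (hQ_iff v uH).2 hH2.symm)
    (by rw [heV]; intro hq; exact hV2 ((hQ_iff v uV).1 hq).symm)
  rw [ClosedWalk.junctionGraph, SimpleGraph.fromRel_adj] at hadj
  obtain ⟨hne, hr⟩ := hadj
  have key : ∃ i : ZMod n, W.f (i + 1) = v ∧ ¬ (Q (W.edgeAt i) ↔ Q (W.edgeAt (i + 1))) := by
    rcases hr with ⟨i, hv, hc⟩ | ⟨i, hv, hc⟩ <;> refine ⟨i, hv, ?_⟩ <;>
        rcases hc with ⟨h1, h2⟩ | ⟨h1, h2⟩ <;> rw [h1, h2] <;>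
      first
        | exact fun hiff => hPe' (hiff.mp hPe)
        | exact fun hiff => hPe' (hiff.mpr hPe)
  obtain ⟨i, hv, hQne⟩ := key
  have e1 : W.edgeAt i = s(W.f i, v) := by rw [ClosedWalk.edgeAt, hv]
  have e2 : W.edgeAt (i + 1) = s(v, W.f (i + 2)) := by
    have e21 : i + 1 + 1 = i + 2 := by ring
    rw [ClosedWalk.edgeAt, e21, hv]
  rw [e1, e2, hQ_iff, hQ_iff] at hQne
  have hne1 : W.f i ≠ v := by have := (W.adj i).ne; rwa [hv] at this
  have hne2 : W.f (i + 2) ≠ v := by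
    have := (W.adj (i + 1)).ne'
    have e21 : i + 1 + 1 = i + 2 := by ring
    rwa [e21, hv] at this
  refine ⟨i, hv, ?_⟩
  rw [hv]
  unfold GridCollinear
  rintro (⟨h1, h2⟩ | ⟨h1, h2⟩)
  · by_cases hA : (W.f i).2 = v.2
    · exact hne1 (Prod.ext h1 hA)
    · have hB : v.2 = (W.f (i + 2)).2 := by tauto
      exact hne2 (Prod.ext h2.symm hB.symm)
  · exact hQne ⟨fun _ => h2, fun _ => h1⟩

open Classical in
lemma even_col {w h n : ℕ} [NeZero n] (W : ClosedWalk (GridGraph w h) n) (x : Fin w) :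
    Even ((Finset.univ.filter (fun i : ZMod n => (W.f (i + 1)).1 = x ∧
      ¬ GridCollinear (W.f i) (W.f (i + 1)) (W.f (i + 2)))).card) := by
  classical
  set A := Finset.univ.filter (fun i : ZMod n =>
    (W.f i).1 = x ∧ (W.f (i + 1)).1 = x) with hA
  set B := Finset.univ.filter (fun i : ZMod n =>
    (W.f (i + 1)).1 = x ∧ (W.f (i + 2)).1 = x) with hB
  set T := Finset.univ.filter (fun i : ZMod n => (W.f (i + 1)).1 = x ∧
    ¬ GridCollinear (W.f i) (W.f (i + 1)) (W.f (i + 2))) with hTT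
  have hTmem : ∀ i, i ∈ T ↔ ((i ∈ A ∧ i ∉ B) ∨ (i ∈ B ∧ i ∉ A)) := by
    intro i
    simp only [hA, hB, hTT, Finset.mem_filter, Finset.mem_univ, true_and]
    by_cases hP : (W.f (i + 1)).1 = x
    · have hbc : (GridGraph w h).Adj (W.f (i + 1)) (W.f (i + 2)) := by
        have := W.adj (i + 1)
        have e : i + 1 + 1 = i + 2 := by ring
        rwa [e] at this
      rw [turn_iff (W.adj i) hbc, hP]
      have hb : (x = (W.f (i + 2)).1) ↔ ((W.f (i + 2)).1 = x) := eq_comm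
      tauto
    · simp [hP]
  have hTeq : T = (A \ B) ∪ (B \ A) := by
    ext i
    rw [Finset.mem_union, Finset.mem_sdiff, Finset.mem_sdiff]
    exact hTmem i
  have himg : A = B.image (· + 1) := by
    ext j
    simp only [Finset.mem_image, hA, hB, Finset.mem_filter, Finset.mem_univ, true_and]
    constructor
    · rintro ⟨h1, h2⟩
      refine ⟨j - 1, ⟨by rwa [sub_add_cancel], ?_⟩, by ring⟩
      have e : j - 1 + 2 = j + 1 := by ring
      rwa [e]
    · rintro ⟨i, ⟨h1, h2⟩, rfl⟩
      refine ⟨h1, ?_⟩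
      have e : i + 1 + 1 = i + 2 := by ring
      rwa [e]
  have hcard : A.card = B.card := by
    rw [himg, Finset.card_image_of_injective _ (add_left_injective 1)]
  have c1 : (A ∩ B).card + (A \ B).card = A.card := Finset.card_inter_add_card_sdiff A B
  have c2 : (B ∩ A).card + (B \ A).card = B.card := Finset.card_inter_add_card_sdiff B A
  have cint : (A ∩ B).card = (B ∩ A).card := by rw [Finset.inter_comm]
  have cu : T.card = (A \ B).card + (B \ A).card := by
    rw [hTeq, Finset.card_union_of_disjoint disjoint_sdiff_sdiff]
  exact ⟨(A \ B).card, by omega⟩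


/-- In any threading of the `w × h` grid, each vertex column (the `h` vertices with a
fixed first coordinate `x`) contains an even number of turns, and hence at least
`2⌈h/2⌉ = 2((h+1)/2)` turns. -/
theorem grid_column_even_turns (w h : ℕ) (hw : 0 < w) (hh : 0 < h) (n : ℕ) [NeZero n]
    (W : ClosedWalk (GridGraph w h) n) (hT : W.IsThreading) (x : Fin w) :
    Even ({i : ZMod n | (W.f (i + 1)).1 = x ∧
        ¬ GridCollinear (W.f i) (W.f (i + 1)) (W.f (i + 2))}.ncard) ∧
    2 * ((h + 1) / 2) ≤ {i : ZMod n | (W.f (i + 1)).1 = x ∧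
        ¬ GridCollinear (W.f i) (W.f (i + 1)) (W.f (i + 2))}.ncard := by
  classical
  set S : Set (ZMod n) := {i : ZMod n | (W.f (i + 1)).1 = x ∧
      ¬ GridCollinear (W.f i) (W.f (i + 1)) (W.f (i + 2))} with hS
  have hncard : S.ncard = (Finset.univ.filter (fun i : ZMod n => (W.f (i + 1)).1 = x ∧
      ¬ GridCollinear (W.f i) (W.f (i + 1)) (W.f (i + 2)))).card := by
    rw [hS, Set.ncard_eq_toFinset_card', Set.toFinset_setOf]
  have heven : Even S.ncard := by rw [hncard]; exact even_col W x
  refine ⟨heven, ?_⟩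
  by_cases hdeg : w = 1 ∨ h = 1
  · exact absurd (degenerate_no_threading hw hh hdeg W hT) id
  · push_neg at hdeg
    have hw2 : 2 ≤ w := by omega
    have hh2 : 2 ≤ h := by omega
    choose g hg1 hg2 using fun y : Fin h => exists_turn hw2 hh2 W hT (x, y)
    have hginj : Function.Injective g := by
      intro y y' he
      have h1 : ((x, y) : Fin w × Fin h) = (x, y') := by
        rw [← hg1 y, he, hg1 y']
      exact (Prod.ext_iff.1 h1).2
    have hsub : Set.range g ⊆ S := by
      rintro _ ⟨y, rfl⟩
      exact ⟨by rw [hg1 y], hg2 y⟩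
    have hle : h ≤ S.ncard := by
      have h1 : (Set.range g).ncard = h := by
        rw [← Nat.card_coe_set_eq, Nat.card_eq_fintype_card,
          Set.card_range_of_injective hginj, Fintype.card_fin]
      rw [← h1]
      exact Set.ncard_le_ncard hsub (Set.toFinite _)
    obtain ⟨r, hr⟩ := heven
    omega
end

section
/- If w is odd and h is even, any threading of the w×h rectangular grid graph has at least (w+1)·h turns, which equals 2⌈w/2⌉·2⌈h/2⌉. -/
open Finset

section Aux

open ClosedWalk

lemma aux_parity {n : ℕ} [NeZero n] (p : ZMod n → Prop)
    [∀ i : ZMod n, Decidable (¬ (p i ↔ p (i + 1)))] :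
    Even (Finset.univ.filter (fun i : ZMod n => ¬ (p i ↔ p (i + 1)))).card := by
  classical
  set x : ZMod n → ZMod 2 := fun i => if p i then 1 else 0 with hx
  have key : (((Finset.univ.filter (fun i : ZMod n => ¬ (p i ↔ p (i + 1)))).card : ℕ) : ZMod 2) = 0 := by
    rw [Finset.card_filter, Nat.cast_sum]
    have step : ∀ i : ZMod n, ((if ¬ (p i ↔ p (i+1)) then (1:ℕ) else 0 : ℕ) : ZMod 2)
        = x i - x (i+1) := by
      intro i
      by_cases h1 : p i <;> by_cases h2 : p (i+1) <;> simp [hx, h1, h2] <;> decide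
    rw [Finset.sum_congr rfl (fun i _ => step i), Finset.sum_sub_distrib]
    have : ∑ i : ZMod n, x (i + 1) = ∑ i : ZMod n, x i :=
      Fintype.sum_equiv (Equiv.addRight (1 : ZMod n)) _ _ (fun i => rfl)
    rw [this, sub_self]
  exact even_iff_two_dvd.mpr ((ZMod.natCast_eq_zero_iff _ 2).mp key)

variable {w h n : ℕ}

/-- step `i` of the walk is horizontal. -/
def Hz (W : ClosedWalk (GridGraph w h) n) (i : ZMod n) : Prop := (W.f i).2 = (W.f (i+1)).2

lemma aux_step_hv (W : ClosedWalk (GridGraph w h) n) (i : ZMod n) :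
    ((W.f i).1 = (W.f (i+1)).1) ↔ ¬ Hz W i := by
  have hadj := W.adj i
  unfold GridGraph at hadj
  rw [SimpleGraph.fromRel_adj] at hadj
  obtain ⟨hne, hrel⟩ := hadj
  unfold Hz
  constructor
  · intro h1 h2
    exact hne (Prod.ext h1 h2)
  · intro h2
    rcases hrel with (⟨h', _⟩|⟨h', _⟩)|(⟨h', _⟩|⟨h', _⟩)
    · exact h'
    · exact absurd h' h2
    · exact h'.symm
    · exact absurd h'.symm h2

lemma aux_mem_turnSet_iff (W : ClosedWalk (GridGraph w h) n) (i : ZMod n) :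
    i ∈ turnSet W ↔ ¬ (Hz W i ↔ Hz W (i+1)) := by
  have h2 : i + 1 + 1 = i + 2 := by ring
  have e1 := aux_step_hv W i
  have e2 := aux_step_hv W (i+1)
  simp only [turnSet, Set.mem_setOf_eq, GridCollinear]
  unfold Hz at *
  rw [h2] at e2 ⊢
  tauto

/-- Crossing lemma for walks in a graph. -/
lemma aux_walk_boundary {α : Type*} {G : SimpleGraph α} (P : α → Prop) {u v : α}
    (p : G.Walk u v) : P u → ¬ P v → ∃ a b, G.Adj a b ∧ P a ∧ ¬ P b := by
  classical
  induction p with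
  | nil => intro hu hv; exact absurd hu hv
  | @cons a b c hadj q ih =>
    intro hu hv
    by_cases hx : P b
    · exact ih hx hv
    · exact ⟨_, _, hadj, hu, hx⟩

/-- An edge of the grid is horizontal. -/
def SymHz {w h : ℕ} : Sym2 (Fin w × Fin h) → Prop :=
  Sym2.lift ⟨fun a b => a.2 = b.2, fun a b => by simp [eq_comm]⟩

lemma aux_symHz_edgeAt (W : ClosedWalk (GridGraph w h) n) (i : ZMod n) :
    SymHz (W.edgeAt i) ↔ Hz W i := Iff.rfl

lemma aux_exists_horiz_edge (hw2 : 2 ≤ w) (v : Fin w × Fin h) :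
    ∃ e ∈ (GridGraph w h).incidenceSet v, SymHz e := by
  rcases lt_or_ge ((v.1 : ℕ) + 1) w with hlt | hge
  · refine ⟨s(v, (⟨(v.1 : ℕ) + 1, hlt⟩, v.2)), ?_, rfl⟩
    rw [SimpleGraph.mk'_mem_incidenceSet_left_iff]
    unfold GridGraph
    rw [SimpleGraph.fromRel_adj]
    refine ⟨?_, Or.inl (Or.inr ⟨rfl, rfl⟩)⟩
    intro hcontra
    have := congrArg (fun x => (x.1 : ℕ)) hcontra
    simp at this
  · have h1 : 1 ≤ (v.1 : ℕ) := by have := v.1.isLt; omega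
    refine ⟨s(((⟨(v.1 : ℕ) - 1, by omega⟩ : Fin w), v.2), v), ?_, rfl⟩
    rw [Sym2.eq_swap, SimpleGraph.mk'_mem_incidenceSet_left_iff]
    have hadj : (GridGraph w h).Adj ((⟨(v.1 : ℕ) - 1, by omega⟩ : Fin w), v.2) v := by
      unfold GridGraph
      rw [SimpleGraph.fromRel_adj]
      refine ⟨?_, Or.inl (Or.inr ⟨rfl, by simp; omega⟩)⟩
      intro hcontra
      have := congrArg (fun x => (x.1 : ℕ)) hcontra
      simp at this
      omega
    exact hadj.symm

lemma aux_exists_vert_edge (hh2 : 2 ≤ h) (v : Fin w × Fin h) :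
    ∃ e ∈ (GridGraph w h).incidenceSet v, ¬ SymHz e := by
  rcases lt_or_ge ((v.2 : ℕ) + 1) h with hlt | hge
  · refine ⟨s(v, (v.1, ⟨(v.2 : ℕ) + 1, hlt⟩)), ?_, ?_⟩
    · rw [SimpleGraph.mk'_mem_incidenceSet_left_iff]
      unfold GridGraph
      rw [SimpleGraph.fromRel_adj]
      refine ⟨?_, Or.inl (Or.inl ⟨rfl, rfl⟩)⟩
      intro hcontra
      have := congrArg (fun x => (x.2 : ℕ)) hcontra
      simp at this
    · intro hcontra
      have hc2 : v.2 = (⟨(v.2 : ℕ) + 1, hlt⟩ : Fin h) := hcontra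
      have := congrArg Fin.val hc2
      simp at this
  · have h1 : 1 ≤ (v.2 : ℕ) := by have := v.2.isLt; omega
    refine ⟨s((v.1, (⟨(v.2 : ℕ) - 1, by omega⟩ : Fin h)), v), ?_, ?_⟩
    · rw [Sym2.eq_swap, SimpleGraph.mk'_mem_incidenceSet_left_iff]
      have hadj : (GridGraph w h).Adj (v.1, (⟨(v.2 : ℕ) - 1, by omega⟩ : Fin h)) v := by
        unfold GridGraph
        rw [SimpleGraph.fromRel_adj]
        refine ⟨?_, Or.inl (Or.inl ⟨rfl, by simp; omega⟩)⟩
        intro hcontra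
        have := congrArg (fun x => (x.2 : ℕ)) hcontra
        simp at this
        omega
      exact hadj.symm
    · intro hcontra
      have hc2 : (⟨(v.2 : ℕ) - 1, by omega⟩ : Fin h) = v.2 := hcontra
      have := congrArg Fin.val hc2
      simp at this
      omega

/-- At every vertex, a threading makes a turn (when the grid is ≥ 2 in both directions). -/
lemma aux_exists_turn (hw2 : 2 ≤ w) (hh2 : 2 ≤ h) [NeZero n]
    (W : ClosedWalk (GridGraph w h) n) (hT : W.IsThreading) (v : Fin w × Fin h) :
    ∃ i, i ∈ turnSet W ∧ W.f (i + 1) = v := by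
  classical
  obtain ⟨e, he, hhor⟩ := aux_exists_horiz_edge hw2 v
  obtain ⟨e', he', hver⟩ := aux_exists_vert_edge hh2 v
  have hconn := hT.2.2 v
  obtain ⟨p⟩ := hconn.preconnected ⟨e, he⟩ ⟨e', he'⟩
  obtain ⟨a, b, hab, hPa, hPb⟩ :=
    aux_walk_boundary (fun x : (GridGraph w h).incidenceSet v => SymHz x.1) p hhor hver
  unfold ClosedWalk.junctionGraph at hab
  rw [SimpleGraph.fromRel_adj] at hab
  obtain ⟨-, hrel⟩ := hab
  have main : ∀ i : ZMod n, W.f (i + 1) = v →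
      ((W.edgeAt i = a.1 ∧ W.edgeAt (i + 1) = b.1) ∨
       (W.edgeAt i = b.1 ∧ W.edgeAt (i + 1) = a.1)) →
      ∃ i, i ∈ turnSet W ∧ W.f (i + 1) = v := by
    intro i hv hc
    refine ⟨i, ?_, hv⟩
    rw [aux_mem_turnSet_iff]
    rcases hc with ⟨h1, h2⟩ | ⟨h1, h2⟩
    · intro hiff
      rw [← aux_symHz_edgeAt, ← aux_symHz_edgeAt, h1, h2] at hiff
      exact hPb (hiff.mp hPa)
    · intro hiff
      rw [← aux_symHz_edgeAt, ← aux_symHz_edgeAt, h1, h2] at hiff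
      exact hPb (hiff.mpr hPa)
  rcases hrel with ⟨i, hv, hc⟩ | ⟨i, hv, hc⟩
  · exact main i hv hc
  · exact main i hv hc.symm

/-- the `w = 1` case is impossible. -/
lemma aux_w_one (hh2 : 2 ≤ h) [NeZero n]
    (W : ClosedWalk (GridGraph 1 h) n) (hcov : W.CoversEdges) (hnu : W.NoUTurn) : False := by
  classical
  set v0 : Fin 1 × Fin h := (0, ⟨0, by omega⟩) with hv0
  set v1 : Fin 1 × Fin h := (0, ⟨1, by omega⟩) with hv1
  have hne : v0 ≠ v1 := by
    intro hcon
    have := congrArg (fun x => (x.2 : ℕ)) hcon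
    simp [hv0, hv1] at this
  have hadj : (GridGraph 1 h).Adj v0 v1 := by
    unfold GridGraph
    rw [SimpleGraph.fromRel_adj]
    exact ⟨hne, Or.inl (Or.inl ⟨rfl, rfl⟩)⟩
  have huniq : ∀ u : Fin 1 × Fin h, (GridGraph 1 h).Adj u v0 → u = v1 := by
    intro u hu
    unfold GridGraph at hu
    rw [SimpleGraph.fromRel_adj] at hu
    obtain ⟨hune, hrel⟩ := hu
    have h1 : u.1 = v1.1 := Subsingleton.elim _ _
    have hlt1 : (u.1 : ℕ) < 1 := u.1.isLt
    have h2 : (u.2 : ℕ) = 1 := by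
      rcases hrel with (⟨-, hx⟩|⟨-, hx⟩)|(⟨-, hx⟩|⟨-, hx⟩) <;>
        simp only [hv0] at hx <;> simp at hx <;> omega
    have h3 : u.2 = v1.2 := Fin.ext (by simp [hv1, h2])
    exact Prod.ext h1 h3
  obtain ⟨i, hi⟩ := hcov s(v0, v1) ((SimpleGraph.mem_edgeSet (GridGraph 1 h)).mpr hadj)
  rw [ClosedWalk.edgeAt, Sym2.eq_iff] at hi
  have key : ∀ j : ZMod n, W.f (j + 1) = v0 → False := by
    intro j hj
    have ha1 := W.adj j
    have ha2 := W.adj (j + 1)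
    rw [hj] at ha1 ha2
    have hj2 : j + 1 + 1 = j + 2 := by ring
    rw [hj2] at ha2
    have e1 : W.f j = v1 := huniq _ ha1
    have e2 : W.f (j + 2) = v1 := huniq _ ha2.symm
    exact hnu j (e2.trans e1.symm)
  rcases hi with ⟨h1, h2⟩ | ⟨h1, h2⟩
  · have hsub : (i - 1) + 1 = i := by ring
    exact key (i - 1) (by rw [hsub]; exact h1)
  · exact key i h2

end Aux
/-- If `w` is odd and `h` is even, any threading of the `w × h` rectangular grid
has at least `(w+1)·h` turns, and `(w+1)·h = 2⌈w/2⌉ · 2⌈h/2⌉`. -/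
theorem grid_odd_even_turns_lower_bound (w h : ℕ) (hw : 0 < w) (hh : 0 < h)
    (how : Odd w) (heh : Even h) (n : ℕ) [NeZero n]
    (W : ClosedWalk (GridGraph w h) n) (hT : W.IsThreading) :
    (w + 1) * h ≤ (turnSet W).ncard ∧
    (w + 1) * h = (2 * ((w + 1) / 2)) * (2 * ((h + 1) / 2)) := by
  classical
  constructor
  swap
  · obtain ⟨k, hk⟩ := how
    obtain ⟨m, hm⟩ := heh
    have e1 : 2 * ((w + 1) / 2) = w + 1 := by omega
    have e2 : 2 * ((h + 1) / 2) = h := by omega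
    rw [e1, e2]
  have hh2 : 2 ≤ h := by obtain ⟨m, hm⟩ := heh; omega
  rcases (by obtain ⟨k, hk⟩ := how; omega : w = 1 ∨ 2 ≤ w) with rfl | hw2
  · exact (aux_w_one hh2 W hT.1 hT.2.1).elim
  -- main counting
  obtain ⟨hcov, hnu, hconn⟩ := hT
  set T : Finset (ZMod n) := Finset.univ.filter (fun i => i ∈ turnSet W) with hT'
  have hncard : (turnSet W).ncard = T.card := by
    rw [Set.ncard_eq_toFinset_card']
    congr 1
    ext i
    simp [hT', Set.mem_toFinset]
  rw [hncard]
  have hfib := Finset.card_eq_sum_card_fiberwise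
    (f := fun i : ZMod n => (W.f (i + 1)).2) (s := T) (t := Finset.univ)
    (fun x _ => Finset.mem_univ _)
  rw [hfib]
  have hbound : ∀ y : Fin h, w + 1 ≤ (T.filter (fun i => (W.f (i + 1)).2 = y)).card := by
    intro y
    set F := T.filter (fun i => (W.f (i + 1)).2 = y) with hF
    have hFeq : F = Finset.univ.filter
        (fun i : ZMod n => ¬ ((Hz W i ∧ (W.f i).2 = y) ↔ (Hz W (i+1) ∧ (W.f (i+1)).2 = y))) := by
      ext i
      simp only [hF, hT', Finset.mem_filter, Finset.mem_univ, true_and]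
      rw [aux_mem_turnSet_iff]
      have h2 : i + 1 + 1 = i + 2 := by ring
      unfold Hz
      rw [h2]
      constructor
      · rintro ⟨hturn, hrow⟩
        intro hiff
        apply hturn
        constructor
        · intro hA
          exact (hiff.mp ⟨hA, hA.trans hrow⟩).1
        · intro hB
          exact (hiff.mpr ⟨hB, hrow⟩).1
      · intro hne
        have hAB : ¬ ((W.f i).2 = (W.f (i+1)).2 ↔ (W.f (i+1)).2 = (W.f (i+2)).2) := by
          intro hiff
          apply hne
          constructor
          · rintro ⟨hA, h0⟩
            exact ⟨hiff.mp hA, hA.symm.trans h0⟩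
          · rintro ⟨hB, h1⟩
            have hA := hiff.mpr hB
            exact ⟨hA, hA.trans h1⟩
        refine ⟨hAB, ?_⟩
        by_cases hA : (W.f i).2 = (W.f (i+1)).2
        · have hB : ¬ (W.f (i+1)).2 = (W.f (i+2)).2 := fun hB => hAB ⟨fun _ => hB, fun _ => hA⟩
          by_contra hy1
          apply hne
          constructor
          · rintro ⟨-, h0⟩
            exact absurd (hA.symm.trans h0) hy1
          · rintro ⟨hB', -⟩
            exact absurd hB' hB
        · have hB : (W.f (i+1)).2 = (W.f (i+2)).2 := by
            by_contra hB
            exact hAB ⟨fun a => absurd a hA, fun b => absurd b hB⟩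
          by_contra hy1
          apply hne
          constructor
          · rintro ⟨hA', -⟩
            exact absurd hA' hA
          · rintro ⟨-, h1⟩
            exact absurd h1 hy1
    have heven : Even F.card := by
      rw [hFeq]
      exact aux_parity _
    have hw_le : w ≤ F.card := by
      have hmaps : ∀ x : Fin w, ∃ i, i ∈ F ∧ W.f (i + 1) = (x, y) := by
        intro x
        obtain ⟨i, hi1, hi2⟩ := aux_exists_turn hw2 hh2 W ⟨hcov, hnu, hconn⟩ (x, y)
        exact ⟨i, by simp [hF, hT', hi1, hi2], hi2⟩
      choose g hg1 hg2 using hmaps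
      have hinj : Set.InjOn g (Finset.univ : Finset (Fin w)) := by
        intro x1 _ x2 _ hgx
        have := (hg2 x1).symm.trans (hgx ▸ hg2 x2)
        exact (Prod.ext_iff.mp this).1
      have := Finset.card_le_card_of_injOn g (fun x _ => hg1 x) hinj
      simpa using this
    obtain ⟨c, hc⟩ := heven
    obtain ⟨k, hk⟩ := how
    omega
  calc (w + 1) * h = ∑ _y : Fin h, (w + 1) := by simp [Finset.sum_const, Nat.mul_comm]
    _ ≤ ∑ y : Fin h, (T.filter (fun i => (W.f (i + 1)).2 = y)).card :=
        Finset.sum_le_sum (fun y _ => hbound y)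
end
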